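/- arXiv:2104.03593 — 2 statements merged into one kernel-verified Lean document; each statement's English description precedes it below -/
import Mathlib

section
/- Let n ≥ 2 and let α ∈ Sₙ be a cyclic permutation of length n (a single n-cycle, e.g. α = (1,2,…,n)). If for every prime divisor p ≥ 3 of n the number 2^{n/p} − 1 is not divisible by p, then the equation α ∘ y ∘ α⁻¹ = y² has only the trivial solution y = 1. -/
/-!
Conjugating by `α ^ k` gives `α ^ k * y * α ^ (-k) = y ^ (2 ^ k)`; for `k = n` this says
`y ^ (2 ^ n) = y`, so `y` has odd order and a nontrivial solution yields a solution `z` of odd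
prime order `p`. As `z` is a power of `z ^ 2`, its fixed points form an `α`-invariant set, so `z`
has no fixed points and its orbits are blocks of size `p` for the transitive group `⟨α⟩`.
Hence `p ∣ n`, and `α ^ (n / p)` maps the `z`-orbit of a point `x` to itself, say
`α ^ (n / p) x = z ^ i x`. On exponents mod `p` it then acts as the affine map
`j ↦ 2 ^ (n / p) * j + i`, which has a fixed point unless `2 ^ (n / p) ≡ 1 [MOD p]`;
but a power of the `n`-cycle `α` other than `1` has no fixed point.
-/

open Equiv Equiv.Perm MulAction Subgroup Pointwise

section Conjugation

variable {G : Type*} [Group G] {a x : G}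

theorem conj_pow_eq_pow_pow_of_conj_eq_pow {m : ℕ} (h : a * x * a⁻¹ = x ^ m) (k : ℕ) :
    a ^ k * x * (a ^ k)⁻¹ = x ^ m ^ k := by
  induction k with
  | zero => simp
  | succ k ih =>
    calc a ^ (k + 1) * x * (a ^ (k + 1))⁻¹ = a * (a ^ k * x * (a ^ k)⁻¹) * a⁻¹ := by group
      _ = x ^ m ^ (k + 1) := by rw [ih, ← conj_pow, h, ← pow_mul, pow_succ']

theorem odd_orderOf_of_conj_eq_sq [Finite G] (h : a * x * a⁻¹ = x ^ 2) : Odd (orderOf x) := by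
  have hk : x ^ 2 ^ orderOf a = x := by
    simpa using (conj_pow_eq_pow_pow_of_conj_eq_pow h (orderOf a)).symm
  have hdvd : orderOf x ∣ 2 ^ orderOf a - 1 := by
    apply orderOf_dvd_of_pow_eq_one
    rw [← mul_left_inj x, ← pow_succ, Nat.sub_add_cancel Nat.one_le_two_pow, hk, one_mul]
  exact (Nat.Even.sub_odd Nat.one_le_two_pow ((even_two.pow_of_ne_zero (orderOf_pos a).ne'))
    odd_one).of_dvd_nat hdvd

theorem exists_prime_orderOf_of_conj_eq_sq [Finite G] (h : a * x * a⁻¹ = x ^ 2) (hx : x ≠ 1) :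
    ∃ p, p.Prime ∧ ∃ z : G, orderOf z = p ∧ a * z * a⁻¹ = z ^ 2 := by
  obtain ⟨p, hp, hpx⟩ := Nat.exists_prime_and_dvd (mt orderOf_eq_one_iff.1 hx)
  refine ⟨p, hp, x ^ (orderOf x / p), orderOf_pow_orderOf_div (orderOf_pos x).ne' hpx, ?_⟩
  rw [← conj_pow, h, ← pow_mul, ← pow_mul, mul_comm]

theorem mem_normalizer_zpowers_of_conj_eq_pow [Finite G] {m : ℕ} (h : a * x * a⁻¹ = x ^ m) :
    a ∈ normalizer (zpowers x : Set G) := by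
  refine mem_normalizer_fintype fun _ ⟨i, hi⟩ ↦ ⟨m * i, ?_⟩
  rw [← hi, ← conj_zpow, h, ← zpow_natCast, ← zpow_mul]

end Conjugation

section Action

variable {G X : Type*} [Group G] [MulAction G X]

theorem smul_orbit_eq_orbit_smul_of_mem_normalizer {N : Subgroup G} {g : G}
    (hg : g ∈ normalizer (N : Set G)) (x : X) : g • orbit N x = orbit N (g • x) := by
  ext y
  simp only [orbit, Set.smul_set_range, Set.mem_range]
  constructor
  · rintro ⟨⟨k, hk⟩, rfl⟩
    exact ⟨⟨g * k * g⁻¹, (mem_normalizer_iff.1 hg k).1 hk⟩, by simp [smul_smul]⟩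
  · rintro ⟨⟨k, hk⟩, rfl⟩
    exact ⟨⟨g⁻¹ * k * g, (mem_normalizer_iff''.1 hg k).1 hk⟩, by simp [smul_smul, mul_assoc]⟩

theorem isBlock_orbit_of_le_normalizer {H N : Subgroup G} (hHN : H ≤ normalizer (N : Set G))
    (x : X) : IsBlock H (orbit N x) := by
  rw [isBlock_iff_smul_eq_or_disjoint]
  rintro ⟨g, hg⟩
  rw [Subgroup.mk_smul, smul_orbit_eq_orbit_smul_of_mem_normalizer (hHN hg)]
  exact orbit.eq_or_disjoint _ _

theorem ncard_orbit_zpowers (z : G) (x : X) : (orbit (zpowers z) x).ncard = period z x := by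
  rw [← Nat.card_coe_set_eq, Nat.card_congr (orbitZPowersEquiv z x), Nat.card_zmod]
  rfl

theorem period_eq_of_orderOf_eq_prime {p : ℕ} (hp : p.Prime) {z : G} (hz : orderOf z = p)
    {x : X} (hx : z • x ≠ x) : period z x = p :=
  ((Nat.dvd_prime hp).1 (hz ▸ period_dvd_orderOf z x)).resolve_left (mt period_eq_one_iff.1 hx)

theorem exists_smul_eq_self_of_conj_eq_pow {p c : ℕ} [Fact p.Prime] {b z : G}
    (hz : orderOf z = p) (hb : b * z * b⁻¹ = z ^ c) (hc : (c : ZMod p) ≠ 1) {x : X}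
    (hx : b • x ∈ orbit (zpowers z) x) : ∃ y : X, b • y = y := by
  obtain ⟨⟨_, i, rfl⟩, hi⟩ := hx
  set j : ℤ := ZMod.cast ((i : ZMod p) / (1 - (c : ZMod p)))
  have hj : ((c * j + i : ℤ) : ZMod p) = j := by
    have : (1 - c : ZMod p) ≠ 0 := sub_ne_zero.2 hc.symm
    push_cast
    rw [ZMod.intCast_zmod_cast]
    field_simp
    ring
  refine ⟨z ^ j • x, ?_⟩
  calc b • z ^ j • x = (b * z ^ j * b⁻¹) • b • x := by simp [smul_smul]
    _ = z ^ (c * j + i) • x := by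
      rw [← conj_zpow, hb, ← hi, zpow_add, mul_smul, ← zpow_natCast, ← zpow_mul]
      rfl
    _ = z ^ j • x := by
      rw [zpow_eq_zpow_iff_modEq.2 (hz ▸ (ZMod.intCast_eq_intCast_iff _ _ _).1 hj)]

end Action

namespace Equiv.Perm

variable {X : Type*} [Fintype X] [DecidableEq X] {α z : Perm X}

theorem IsCycle.isPretransitive_zpowers (hα : α.IsCycle) (hsupp : α.support = Finset.univ) :
    IsPretransitive (zpowers α) X := by
  refine ⟨fun x y ↦ ?_⟩
  obtain ⟨i, hi⟩ := hα.exists_zpow_eq (mem_support.1 (hsupp ▸ Finset.mem_univ x))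
    (mem_support.1 (hsupp ▸ Finset.mem_univ y))
  exact ⟨⟨α ^ i, zpow_mem_zpowers α i⟩, hi⟩

theorem IsCycle.apply_ne_self_of_conj_eq_sq (hα : α.IsCycle) (hsupp : α.support = Finset.univ)
    (h : α * z * α⁻¹ = z ^ 2) (hz : z ≠ 1) (x : X) : z x ≠ x := by
  have hmove : ∀ w, α w ≠ w := fun w ↦ mem_support.1 (hsupp ▸ Finset.mem_univ w)
  have hfix : ∀ w, z w = w → z (α w) = α w := by
    intro w hw
    obtain ⟨m, hm⟩ := odd_orderOf_of_conj_eq_sq h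
    have hsq : (z ^ 2) (α w) = α w := by rw [← h]; simp [hw]
    have hpow : (z ^ 2) ^ (m + 1) = z := by
      rw [← pow_mul, show 2 * (m + 1) = orderOf z + 1 by omega, pow_succ, pow_orderOf_eq_one,
        one_mul]
    rw [← hpow]
    exact pow_apply_eq_self_of_apply_eq_self hsq _
  intro hx
  refine hz (Equiv.ext fun y ↦ ?_)
  obtain ⟨i, rfl⟩ := hα.exists_pow_eq (hmove x) (hmove y)
  induction i with
  | zero => simpa using hx
  | succ i ih => rw [pow_succ', mul_apply, hfix _ ih, one_apply]

theorem IsCycle.dvd_card_and_dvd_two_pow_div_sub_one_of_conj_eq_sq (hα : α.IsCycle)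
    (hsupp : α.support = Finset.univ) (h : α * z * α⁻¹ = z ^ 2) {p : ℕ} (hp : p.Prime)
    (hz : orderOf z = p) : p ∣ Fintype.card X ∧ p ∣ 2 ^ (Fintype.card X / p) - 1 := by
  have := hα.isPretransitive_zpowers hsupp
  have : Fact p.Prime := ⟨hp⟩
  have hz1 : z ≠ 1 := by rintro rfl; rw [orderOf_one] at hz; exact hp.one_lt.ne hz
  obtain ⟨x, -⟩ := hα.nonempty_support
  set B := orbit (zpowers z) x
  have hB : IsBlock (zpowers α) B :=
    isBlock_orbit_of_le_normalizer (zpowers_le.2 (mem_normalizer_zpowers_of_conj_eq_pow h)) x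
  set d := period α B
  have hcard : p * d = Fintype.card X := by
    rw [← Nat.card_eq_fintype_card, ← hB.ncard_block_mul_ncard_orbit_eq ⟨x, mem_orbit_self x⟩,
      ncard_orbit_zpowers, ncard_orbit_zpowers,
      period_eq_of_orderOf_eq_prime hp hz (hα.apply_ne_self_of_conj_eq_sq hsupp h hz1 x)]
  have hX : 0 < Fintype.card X := Fintype.card_pos_iff.2 ⟨x⟩
  have hd : 0 < d := Nat.pos_of_ne_zero fun hd ↦ by simp [hd] at hcard; omega
  have hdX : d < Fintype.card X := by
    rw [← hcard]; exact lt_mul_left hd hp.one_lt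
  have hαd : (α ^ d) • x ∈ B := by
    rw [← pow_period_smul α B]
    exact Set.smul_mem_smul_set (mem_orbit_self x)
  refine ⟨Dvd.intro d hcard, ?_⟩
  rw [← hcard, Nat.mul_div_cancel_left d hp.pos, ← Nat.modEq_iff_dvd' Nat.one_le_two_pow,
    ← ZMod.natCast_eq_natCast_iff, Nat.cast_one, eq_comm]
  by_contra hc
  obtain ⟨y, hy⟩ :=
    exists_smul_eq_self_of_conj_eq_pow hz (conj_pow_eq_pow_pow_of_conj_eq_pow h d) hc hαd
  have hαd1 : α ^ d = 1 := hα.pow_eq_one_iff.2 ⟨y, mem_support.1 (hsupp ▸ Finset.mem_univ y), hy⟩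
  have hXd : Fintype.card X ∣ d := by
    rw [← Finset.card_univ, ← hsupp, ← hα.orderOf]
    exact orderOf_dvd_of_pow_eq_one hαd1
  exact absurd (Nat.le_of_dvd hd hXd) (not_le.2 hdX)

end Equiv.Perm

theorem stmt_12_general (n : ℕ) (α : Equiv.Perm (Fin n))
    (hcyc : α.IsCycle) (hsupp : α.support = Finset.univ)
    (h : ∀ p : ℕ, p.Prime → 3 ≤ p → p ∣ n → ¬ p ∣ 2 ^ (n / p) - 1) :
    ∀ y : Equiv.Perm (Fin n), α * y * α⁻¹ = y ^ 2 → y = 1 := by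
  intro y hy
  by_contra hy1
  obtain ⟨p, hp, z, hz, hαz⟩ := exists_prime_orderOf_of_conj_eq_sq hy hy1
  have hp3 : 3 ≤ p := by
    obtain ⟨k, rfl⟩ := hz ▸ odd_orderOf_of_conj_eq_sq hαz
    have := hp.two_le
    omega
  obtain ⟨hpn, hp2⟩ := hcyc.dvd_card_and_dvd_two_pow_div_sub_one_of_conj_eq_sq hsupp hαz hp hz
  rw [Fintype.card_fin] at hpn hp2
  exact h p hp hp3 hpn hp2

/-- Corollary (A3). Let `α ∈ Sₙ` (`n ≥ 2`) be a single `n`-cycle. If for every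
prime divisor `p ≥ 3` of `n` the number `2^{n/p} - 1` is not divisible by `p`,
then `α ∘ y ∘ α⁻¹ = y²` has only the trivial solution `y = 1`. -/
theorem stmt_12 (n : ℕ) (hn : 2 ≤ n) (α : Equiv.Perm (Fin n))
    (hcyc : α.IsCycle) (hsupp : α.support = Finset.univ)
    (h : ∀ p : ℕ, p.Prime → 3 ≤ p → p ∣ n → ¬ p ∣ 2 ^ (n / p) - 1) :
    ∀ y : Equiv.Perm (Fin n), α * y * α⁻¹ = y ^ 2 → y = 1 :=
  stmt_12_general n α hcyc hsupp h
end

section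
/- Let α = (1,2,3,4,5,6)∘(7,8,9,10,11,12) ∈ S₁₂, a product of two disjoint cycles of length 6. Set y₁ = (1,3,5)∘(2,6,4) and y₂ = (7,9,11)∘(8,12,10). Then y₁∘y₂ = y₂∘y₁, y₁³ = y₂³ = 1, and the set of solutions of α ∘ y ∘ α⁻¹ = y² in S₁₂ is exactly { y₁^i ∘ y₂^j : 0 ≤ i, j ≤ 2 }; in particular the equation has exactly 9 solutions, 8 of them non-trivial. -/
/-!
Conjugation by `α` squares `y`, so `α⁶ = 1` forces `y⁶³ = 1`, and the fixed-point set of a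
solution (which has odd order) is `α`-invariant: a union of the two `6`-cycles of `α`. A `7`-cycle
of `y⁹`, or a `9`-cycle of `y`, would make `y⁹` resp. `y³` move more than `6` points, hence all
`12`, and then `7` resp. `9` would divide `12`; so `y³ = 1`. Then `α y α⁻¹ = y⁻¹`, so `y` commutes
with `α²` and permutes its four `3`-cycles; the induced permutation of these blocks has order
dividing `3` and is inverted by the double transposition induced by `α`, so it is trivial. A
solution preserving the blocks is determined by its values at `0` and `6`, which leaves the nine
`y₁ⁱ y₂ʲ`.
-/

open Equiv Equiv.Perm Finset

section Group

variable {G : Type*} [Group G] {a y : G}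

theorem pow_mul_mul_inv_pow_eq_pow_two_pow (h : a * y * a⁻¹ = y ^ 2) (k : ℕ) :
    a ^ k * y * (a ^ k)⁻¹ = y ^ 2 ^ k := by
  induction k with
  | zero => simp
  | succ k ih =>
    calc a ^ (k + 1) * y * (a ^ (k + 1))⁻¹ = a * (a ^ k * y * (a ^ k)⁻¹) * a⁻¹ := by group
      _ = (a * y * a⁻¹) ^ 2 ^ k := by rw [ih, conj_pow]
      _ = y ^ 2 ^ (k + 1) := by rw [h, ← pow_mul, pow_succ']

theorem pow_two_pow_sub_one_eq_one (h : a * y * a⁻¹ = y ^ 2) {n : ℕ} (hn : a ^ n = 1) :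
    y ^ (2 ^ n - 1) = 1 := by
  have hy : y ^ 2 ^ n = y := by
    rw [← pow_mul_mul_inv_pow_eq_pow_two_pow h n, hn]
    simp
  rwa [← pow_sub_one_mul (pow_ne_zero n two_ne_zero), mul_eq_right] at hy

theorem mul_pow_mul_inv_eq_pow_pow_two (h : a * y * a⁻¹ = y ^ 2) (m : ℕ) :
    a * y ^ m * a⁻¹ = (y ^ m) ^ 2 := by
  rw [← conj_pow, h, ← pow_mul, ← pow_mul, mul_comm]

theorem mul_sq_mul_inv_eq_self (h : a * y * a⁻¹ = y ^ 2) (h3 : y ^ 3 = 1) :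
    a * y ^ 2 * a⁻¹ = y := by
  rw [mul_pow_mul_inv_eq_pow_pow_two h, ← pow_mul, show 2 * 2 = 3 + 1 by rfl, pow_succ, h3,
    one_mul]

theorem commute_sq_of_mul_mul_inv_eq_sq (h : a * y * a⁻¹ = y ^ 2) (h3 : y ^ 3 = 1) :
    Commute (a ^ 2) y := by
  refine mul_inv_eq_iff_eq_mul.mp ?_
  calc a ^ 2 * y * (a ^ 2)⁻¹ = a * (a * y * a⁻¹) * a⁻¹ := by
        rw [sq, mul_inv_rev]; simp only [mul_assoc]
    _ = y := by rw [h, mul_sq_mul_inv_eq_self h h3]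

end Group

namespace Equiv.Perm

variable {β : Type*}

theorem mapsTo_fixedPoints_of_conj_eq_sq {g s : Perm β} (h : g * s * g⁻¹ = s ^ 2) {n : ℕ}
    (hn : Odd n) (hs : s ^ n = 1) :
    Set.MapsTo g (Function.fixedPoints s) (Function.fixedPoints s) := by
  intro x (hx : s x = x)
  obtain ⟨m, rfl⟩ := hn
  have hsq : (s ^ 2) (g x) = g x := by
    rw [← h]
    simp [hx]
  have : s = (s ^ 2) ^ (m + 1) := by
    rw [← pow_mul, show 2 * (m + 1) = 2 * m + 1 + 1 by ring, pow_succ, hs, one_mul]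
  rw [this]
  exact pow_apply_eq_self_of_apply_eq_self hsq _

theorem SameCycle.mem_of_mapsTo [Finite β] {g : Perm β} {s : Set β} (hs : Set.MapsTo g s s)
    {x z : β} (hxz : g.SameCycle x z) (hx : x ∈ s) : z ∈ s := by
  obtain ⟨i, rfl⟩ := hxz.exists_nat_pow_eq
  exact hs.perm_pow i hx

variable [Fintype β] [DecidableEq β]

theorem card_support_cycleOf_eq_prime_pow {σ : Perm β} {p k : ℕ} (hp : p.Prime)
    (hσ : σ ^ p ^ (k + 1) = 1) {x : β} (hx : (σ ^ p ^ k) x ≠ x) :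
    #(σ.cycleOf x).support = p ^ (k + 1) := by
  have hσx : σ x ≠ x := fun h => hx (pow_apply_eq_self_of_apply_eq_self h _)
  rw [← (σ.isCycle_cycleOf hσx).orderOf]
  refine Nat.eq_prime_pow_of_dvd_least_prime_pow hp (fun hdvd => hx ?_) ?_
  · rw [← cycleOf_pow_apply_self, orderOf_dvd_iff_pow_eq_one.mp hdvd, one_apply]
  · exact (orderOf_cycleOf_dvd_orderOf σ x).trans (orderOf_dvd_of_pow_eq_one hσ)

theorem support_cycleOf_subset_support_pow {σ : Perm β} {x : β} {n : ℕ} (hx : (σ ^ n) x ≠ x) :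
    (σ.cycleOf x).support ⊆ (σ ^ n).support := by
  intro z hz
  obtain ⟨i, rfl⟩ := ((mem_support_cycleOf_iff.mp hz).1)
  rw [mem_support, ← mul_apply, ((Commute.refl σ).pow_left n).zpow_right i |>.eq, mul_apply]
  exact fun h => hx ((σ ^ i).injective h)

theorem prime_pow_dvd_card_of_forall_pow_apply_ne {σ : Perm β} {p k : ℕ} (hp : p.Prime)
    (hσ : σ ^ p ^ (k + 1) = 1) (hfree : ∀ x, (σ ^ p ^ k) x ≠ x) :
    p ^ (k + 1) ∣ Fintype.card β := by
  have hsupp : σ.support = univ := eq_univ_of_forall fun x =>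
    mem_support.mpr fun h => hfree x (pow_apply_eq_self_of_apply_eq_self h _)
  rw [← card_univ, ← hsupp, ← sum_cycleType, cycleType_def]
  refine Multiset.dvd_sum fun n hn => ?_
  obtain ⟨c, hc, rfl⟩ := Multiset.mem_map.mp hn
  obtain ⟨a, ha⟩ := (mem_cycleFactorsFinset_iff.mp hc).1.nonempty_support
  rw [Function.comp_apply, cycle_is_cycleOf ha hc,
    card_support_cycleOf_eq_prime_pow hp hσ (hfree a)]

end Equiv.Perm

namespace TwoSixCycles

def α : Perm (Fin 12) :=
  ([0, 1, 2, 3, 4, 5] : List (Fin 12)).formPerm * ([6, 7, 8, 9, 10, 11] : List (Fin 12)).formPerm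

def y₁ : Perm (Fin 12) :=
  ([0, 2, 4] : List (Fin 12)).formPerm * ([1, 5, 3] : List (Fin 12)).formPerm

def y₂ : Perm (Fin 12) :=
  ([6, 8, 10] : List (Fin 12)).formPerm * ([7, 11, 9] : List (Fin 12)).formPerm

theorem α_pow_six : α ^ 6 = 1 := by decide +kernel

theorem card_sameCycle_α : ∀ z : Fin 12, #{w | α.SameCycle z w} = 6 := by decide +kernel

theorem sameCycle_α_zero_or_six : ∀ x : Fin 12, α.SameCycle 0 x ∨ α.SameCycle 6 x := by
  decide +kernel

variable {y : Perm (Fin 12)}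

theorem pow_sixtyThree_eq_one (h : α * y * α⁻¹ = y ^ 2) : y ^ 63 = 1 :=
  pow_two_pow_sub_one_eq_one h α_pow_six

theorem apply_ne_self_of_six_lt_card_support (h : α * y * α⁻¹ = y ^ 2)
    (hy : 6 < #y.support) (z : Fin 12) : y z ≠ z := by
  intro hz
  have hfix := mapsTo_fixedPoints_of_conj_eq_sq h ⟨31, rfl⟩ (pow_sixtyThree_eq_one h)
  have hsub : y.support ⊆ ({w | ¬α.SameCycle z w} : Finset (Fin 12)) := fun w hw =>
    mem_filter.mpr ⟨mem_univ w, fun hzw => mem_support.mp hw (hzw.mem_of_mapsTo hfix hz)⟩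
  have hsplit := card_filter_add_card_filter_not (s := univ) (α.SameCycle z)
  rw [card_sameCycle_α, card_univ, Fintype.card_fin] at hsplit
  have := card_le_card hsub
  omega

theorem pow_prime_pow_eq_one_of_conj_eq_sq {σ : Perm (Fin 12)} {p k : ℕ} (hp : p.Prime)
    (hσ : σ ^ p ^ (k + 1) = 1) (h : α * σ ^ p ^ k * α⁻¹ = (σ ^ p ^ k) ^ 2)
    (h6 : 6 < p ^ (k + 1)) (h12 : ¬p ^ (k + 1) ∣ 12) : σ ^ p ^ k = 1 := by
  by_contra hne
  obtain ⟨x, hx⟩ : ∃ x, (σ ^ p ^ k) x ≠ x := by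
    by_contra! hfix
    exact hne (Perm.ext hfix)
  have hlong : 6 < #(σ ^ p ^ k).support := by
    rw [← card_support_cycleOf_eq_prime_pow hp hσ hx] at h6
    exact h6.trans_le (card_le_card (support_cycleOf_subset_support_pow hx))
  have := prime_pow_dvd_card_of_forall_pow_apply_ne hp hσ
    (apply_ne_self_of_six_lt_card_support h hlong)
  rw [Fintype.card_fin] at this
  exact h12 this

theorem pow_three_eq_one (h : α * y * α⁻¹ = y ^ 2) : y ^ 3 = 1 := by
  have h9 : y ^ 9 = 1 := by
    simpa using pow_prime_pow_eq_one_of_conj_eq_sq (σ := y ^ 9) (k := 0) Nat.prime_seven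
      (by rw [← pow_mul]; exact pow_sixtyThree_eq_one h)
      (by simpa using mul_pow_mul_inv_eq_pow_pow_two h 9) (by norm_num) (by norm_num)
  exact pow_prime_pow_eq_one_of_conj_eq_sq (σ := y) (k := 1) Nat.prime_three h9
    (mul_pow_mul_inv_eq_pow_pow_two h 3) (by norm_num) (by norm_num)

-- The `3`-cycles `{0, 2, 4}`, `{1, 3, 5}`, `{6, 8, 10}`, `{7, 9, 11}` of `α²`, numbered `0` to `3`.
def block (x : Fin 12) : Fin 4 := ⟨x % 2 + 2 * (x / 6), by omega⟩

def blockRep : Fin 4 → Fin 12 := ![0, 1, 6, 7]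

def blockSwap : Fin 4 → Fin 4 := ![1, 0, 3, 2]

theorem sameCycle_α_sq_iff : ∀ x z : Fin 12, (α ^ 2).SameCycle x z ↔ block x = block z := by
  decide +kernel

theorem block_blockRep : ∀ k : Fin 4, block (blockRep k) = k := by decide +kernel

theorem block_α_apply : ∀ x : Fin 12, block (α x) = blockSwap (block x) := by decide +kernel

theorem eq_self_of_cube_of_conj_blockSwap :
    ∀ P : Fin 4 → Fin 4, (∀ k, P (P (P k)) = k) → (∀ k, P (blockSwap (P k)) = blockSwap k) →
      ∀ k, P k = k := by
  decide +kernel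

theorem apply_apply_apply (h : α * y * α⁻¹ = y ^ 2) (x : Fin 12) : y (y (y x)) = x := by
  rw [← mul_apply, ← mul_apply, ← pow_three', pow_three_eq_one h, one_apply]

theorem apply_α (h : α * y * α⁻¹ = y ^ 2) (x : Fin 12) : y (α x) = α (y (y x)) := by
  rw [← mul_apply, ← mul_inv_eq_iff_eq_mul.mp (mul_sq_mul_inv_eq_self h (pow_three_eq_one h)),
    mul_apply, sq, mul_apply]

theorem block_apply (h : α * y * α⁻¹ = y ^ 2) (x : Fin 12) : block (y x) = block x := by
  have h3 := pow_three_eq_one h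
  have hc := commute_sq_of_mul_mul_inv_eq_sq h h3
  obtain ⟨P, hP⟩ : ∃ P : Fin 4 → Fin 4, ∀ x, block (y x) = P (block x) := by
    refine ⟨fun k => block (y (blockRep k)), fun x => ?_⟩
    have hx : (α ^ 2).SameCycle (blockRep (block x)) x := by
      rw [sameCycle_α_sq_iff, block_blockRep]
    have := hx.conj (g := y)
    rw [← hc.eq, mul_inv_cancel_right, sameCycle_α_sq_iff] at this
    exact this.symm
  have hsurj : ∀ k, ∃ x, block x = k := fun k => ⟨blockRep k, block_blockRep k⟩
  have hP3 : ∀ k, P (P (P k)) = k := by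
    intro k
    obtain ⟨x, rfl⟩ := hsurj k
    rw [← hP, ← hP, ← hP, apply_apply_apply h]
  have hPswap : ∀ k, P (blockSwap (P k)) = blockSwap k := by
    intro k
    obtain ⟨x, rfl⟩ := hsurj k
    rw [← hP, ← block_α_apply, ← hP, apply_α h, apply_apply_apply h, block_α_apply]
  rw [hP, eq_self_of_cube_of_conj_blockSwap P hP3 hPswap]

theorem eq_of_apply_zero_of_apply_six {y' : Perm (Fin 12)} (h : α * y * α⁻¹ = y ^ 2)
    (h' : α * y' * α⁻¹ = y' ^ 2) (h0 : y 0 = y' 0) (h6 : y 6 = y' 6) : y = y' := by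
  have hc := commute_sq_of_mul_mul_inv_eq_sq h (pow_three_eq_one h)
  have hc' := commute_sq_of_mul_mul_inv_eq_sq h' (pow_three_eq_one h')
  have hsq : Set.MapsTo ⇑(α ^ 2) {x | y x = y' x} {x | y x = y' x} :=
    fun x (hx : y x = y' x) => by
      change y ((α ^ 2) x) = y' ((α ^ 2) x)
      rw [← mul_apply, ← hc.eq, mul_apply, hx, ← mul_apply, hc'.eq, mul_apply]
  have hα : Set.MapsTo α {x | y x = y' x} {x | y x = y' x} := fun x (hx : y x = y' x) => by
    have hyx : y (y x) = y' (y x) :=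
      ((sameCycle_α_sq_iff x (y x)).mpr (block_apply h x).symm).mem_of_mapsTo hsq hx
    change y (α x) = y' (α x)
    rw [apply_α h, apply_α h', hyx, hx]
  refine Perm.ext fun x => ?_
  rcases sameCycle_α_zero_or_six x with hx | hx
  exacts [hx.mem_of_mapsTo hα h0, hx.mem_of_mapsTo hα h6]

theorem y₁_mul_y₂_comm : y₁ * y₂ = y₂ * y₁ := by decide +kernel

theorem y₁_pow_three : y₁ ^ 3 = 1 := by decide +kernel

theorem y₂_pow_three : y₂ ^ 3 = 1 := by decide +kernel

theorem conj_y₁_pow_mul_y₂_pow : ∀ i ≤ 2, ∀ j ≤ 2,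
    α * (y₁ ^ i * y₂ ^ j) * α⁻¹ = (y₁ ^ i * y₂ ^ j) ^ 2 := by
  decide +kernel

theorem exists_y₁_pow_mul_y₂_pow_apply : ∀ a b : Fin 12, block a = block 0 → block b = block 6 →
    ∃ i ≤ 2, ∃ j ≤ 2, (y₁ ^ i * y₂ ^ j) 0 = a ∧ (y₁ ^ i * y₂ ^ j) 6 = b := by
  decide +kernel

theorem conj_eq_sq_iff : α * y * α⁻¹ = y ^ 2 ↔ ∃ i j : ℕ, i ≤ 2 ∧ j ≤ 2 ∧ y = y₁ ^ i * y₂ ^ j := by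
  constructor
  · intro h
    obtain ⟨i, hi, j, hj, h0, h6⟩ :=
      exists_y₁_pow_mul_y₂_pow_apply (y 0) (y 6) (block_apply h 0) (block_apply h 6)
    exact ⟨i, j, hi, hj,
      eq_of_apply_zero_of_apply_six h (conj_y₁_pow_mul_y₂_pow i hi j hj) h0.symm h6.symm⟩
  · rintro ⟨i, j, hi, hj, rfl⟩
    exact conj_y₁_pow_mul_y₂_pow i hi j hj

theorem setOf_conj_eq_sq : {y : Perm (Fin 12) | α * y * α⁻¹ = y ^ 2} =
    ((range 3 ×ˢ range 3).image fun p : ℕ × ℕ => y₁ ^ p.1 * y₂ ^ p.2 : Finset _) := by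
  ext y
  simp [conj_eq_sq_iff, Nat.lt_succ_iff, and_assoc, eq_comm (a := y)]

theorem ncard_setOf_conj_eq_sq : {y : Perm (Fin 12) | α * y * α⁻¹ = y ^ 2}.ncard = 9 := by
  rw [setOf_conj_eq_sq, Set.ncard_coe_finset]
  decide +kernel

theorem ncard_setOf_conj_eq_sq_ne_one :
    {y : Perm (Fin 12) | α * y * α⁻¹ = y ^ 2 ∧ y ≠ 1}.ncard = 8 := by
  have : {y : Perm (Fin 12) | α * y * α⁻¹ = y ^ 2 ∧ y ≠ 1} =
      {y : Perm (Fin 12) | α * y * α⁻¹ = y ^ 2} \ {1} := rfl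
  rw [this, Set.ncard_sdiff_singleton_of_mem (by simp), ncard_setOf_conj_eq_sq]

end TwoSixCycles

/-- Corollary (B4). For `α = (1,…,6)∘(7,…,12) ∈ S₁₂` (written 0-indexed on
`Fin 12` as `(0,…,5)∘(6,…,11)`), with `y₁ = (1,3,5)∘(2,6,4)` (0-indexed
`(0,2,4)∘(1,5,3)`) and `y₂ = (7,9,11)∘(8,12,10)` (0-indexed `(6,8,10)∘(7,11,9)`):
`y₁` and `y₂` commute, `y₁³ = y₂³ = 1`, the solution set of `α ∘ y ∘ α⁻¹ = y²`
is exactly `{y₁^i ∘ y₂^j : 0 ≤ i, j ≤ 2}`, and there are exactly `9` solutions,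
`8` of them non-trivial. -/
theorem stmt_17 :
    let α : Equiv.Perm (Fin 12) :=
      ([0, 1, 2, 3, 4, 5] : List (Fin 12)).formPerm *
        ([6, 7, 8, 9, 10, 11] : List (Fin 12)).formPerm
    let y₁ : Equiv.Perm (Fin 12) :=
      ([0, 2, 4] : List (Fin 12)).formPerm * ([1, 5, 3] : List (Fin 12)).formPerm
    let y₂ : Equiv.Perm (Fin 12) :=
      ([6, 8, 10] : List (Fin 12)).formPerm * ([7, 11, 9] : List (Fin 12)).formPerm
    y₁ * y₂ = y₂ * y₁ ∧ y₁ ^ 3 = 1 ∧ y₂ ^ 3 = 1 ∧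
    {y : Equiv.Perm (Fin 12) | α * y * α⁻¹ = y ^ 2} =
      {y : Equiv.Perm (Fin 12) | ∃ i j : ℕ, i ≤ 2 ∧ j ≤ 2 ∧ y = y₁ ^ i * y₂ ^ j} ∧
    Set.ncard {y : Equiv.Perm (Fin 12) | α * y * α⁻¹ = y ^ 2} = 9 ∧
    Set.ncard {y : Equiv.Perm (Fin 12) | (α * y * α⁻¹ = y ^ 2) ∧ y ≠ 1} = 8 :=
  ⟨TwoSixCycles.y₁_mul_y₂_comm, TwoSixCycles.y₁_pow_three, TwoSixCycles.y₂_pow_three,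
    Set.ext fun _ => TwoSixCycles.conj_eq_sq_iff, TwoSixCycles.ncard_setOf_conj_eq_sq,
    TwoSixCycles.ncard_setOf_conj_eq_sq_ne_one⟩
end
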